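/- arXiv:1903.10898 — 3 statements merged into one kernel-verified Lean document; each statement's English description precedes it below -/
import Mathlib

section
/- The function M ↦ (det M)^(1/n) is concave on the set of positive definite n×n Hermitian matrices: for positive definite Hermitian matrices A, B and t ∈ [0,1], det((1-t)A + tB)^(1/n) ≥ (1-t)·det(A)^(1/n) + t·det(B)^(1/n). -/
/-!
`M ↦ (det M)^(1/n)` is positively homogeneous of degree one, so concavity is equivalent to
superadditivity, i.e. Minkowski's determinant inequality
`det A^(1/n) + det B^(1/n) ≤ det (A + B)^(1/n)`. Writing `S = √A` and `C = S⁻¹ B S⁻¹ ≥ 0` we have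
`A + B = S (1 + C) S` and `B = S C S`, so after dividing by `det A^(1/n)` the inequality becomes
`1 + (∏ μᵢ)^(1/n) ≤ (∏ (1 + μᵢ))^(1/n)` for the eigenvalues `μᵢ ≥ 0` of `C`. This follows by adding
the AM-GM inequalities for the numbers `1 / (1 + μᵢ)` and `μᵢ / (1 + μᵢ)`, whose sum is `1`.
-/

open ComplexOrder

open Finset in
theorem Real.one_add_prod_rpow_inv_card_le {ι : Type*} [Fintype ι] [Nonempty ι] {μ : ι → ℝ}
    (hμ : ∀ i, 0 ≤ μ i) :
    1 + (∏ i, μ i) ^ (Fintype.card ι : ℝ)⁻¹ ≤ (∏ i, (1 + μ i)) ^ (Fintype.card ι : ℝ)⁻¹ := by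
  set w : ℝ := (Fintype.card ι : ℝ)⁻¹
  have hpos : ∀ i, 0 < 1 + μ i := fun i => by linarith [hμ i]
  have hP : 0 < ∏ i, (1 + μ i) := prod_pos fun i _ => hpos i
  have amgm : ∀ x : ι → ℝ, (∀ i, 0 ≤ x i) →
      (∏ i, x i) ^ w / (∏ i, (1 + μ i)) ^ w ≤ ∑ i, w * (x i / (1 + μ i)) := fun x hx => by
    have hxμ : ∀ i ∈ univ, 0 ≤ x i / (1 + μ i) := fun i _ => div_nonneg (hx i) (hpos i).le
    rw [← Real.div_rpow (prod_nonneg fun i _ => hx i) hP.le, ← prod_div_distrib,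
      ← Real.finsetProd_rpow _ _ hxμ]
    exact Real.geom_mean_le_arith_mean_weighted _ _ _ (fun _ _ => by positivity) (by simp [w]) hxμ
  have hsum : ∑ i, w * (1 / (1 + μ i)) + ∑ i, w * (μ i / (1 + μ i)) = 1 := by
    simp_rw [← sum_add_distrib, ← mul_add, ← add_div, div_self (hpos _).ne']
    simp [w]
  have := (add_le_add (amgm (fun _ => 1) fun _ => zero_le_one) (amgm μ hμ)).trans_eq hsum
  rwa [← add_div, div_le_one (Real.rpow_pos_of_pos hP w), prod_const_one, Real.one_rpow] at this

namespace Matrix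

open scoped MatrixOrder

variable {𝕜 n : Type*} [RCLike 𝕜] [Fintype n] [DecidableEq n] {A B : Matrix n n 𝕜}

theorem IsHermitian.det_one_add (hA : A.IsHermitian) :
    det (1 + A) = ∏ i, ((1 + hA.eigenvalues i : ℝ) : 𝕜) := by
  have h : 1 + A = cfc (fun x : ℝ => 1 + x) A := by
    rw [cfc_const_add _ _ _, cfc_id' ℝ A, algebraMap_eq_diagonal]
    simp
  rw [h, hA.cfc_eq, IsHermitian.cfc, Unitary.conjStarAlgAut_apply, det_mul_right_comm,
    Unitary.mul_star_self_of_mem hA.eigenvectorUnitary.2, one_mul, det_diagonal]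
  simp

theorem IsHermitian.re_det_eq_prod_eigenvalues (hA : A.IsHermitian) :
    RCLike.re A.det = ∏ i, hA.eigenvalues i := by
  rw [hA.det_eq_prod_eigenvalues, ← RCLike.ofReal_prod, RCLike.ofReal_re]

theorem IsHermitian.ofReal_re_det (hA : A.IsHermitian) : (RCLike.re A.det : 𝕜) = A.det := by
  rw [hA.re_det_eq_prod_eigenvalues, hA.det_eq_prod_eigenvalues, RCLike.ofReal_prod]

theorem PosSemidef.re_det_nonneg (hA : A.PosSemidef) : 0 ≤ RCLike.re A.det :=
  (RCLike.nonneg_iff.1 hA.det_nonneg).1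

theorem re_det_smul_rpow_inv_card [Nonempty n] (hA : 0 ≤ RCLike.re A.det) {c : ℝ} (hc : 0 ≤ c) :
    RCLike.re (c • A).det ^ (Fintype.card n : ℝ)⁻¹ =
      c * RCLike.re A.det ^ (Fintype.card n : ℝ)⁻¹ := by
  rw [RCLike.real_smul_eq_coe_smul (K := 𝕜), det_smul, ← RCLike.ofReal_pow, RCLike.re_ofReal_mul,
    Real.mul_rpow (pow_nonneg hc _) hA, Real.pow_rpow_inv_natCast hc Fintype.card_ne_zero]

theorem PosDef.re_det_rpow_add_le [Nonempty n] (hA : A.PosDef) (hB : B.PosSemidef) :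
    RCLike.re A.det ^ (Fintype.card n : ℝ)⁻¹ + RCLike.re B.det ^ (Fintype.card n : ℝ)⁻¹ ≤
      RCLike.re (A + B).det ^ (Fintype.card n : ℝ)⁻¹ := by
  set S := CFC.sqrt A
  have hSS : S * S = A := CFC.sqrt_mul_sqrt_self A hA.posSemidef.nonneg
  have hS : IsUnit S.det :=
    (isUnit_iff_isUnit_det S).1 ((CFC.isUnit_sqrt_iff A hA.posSemidef.nonneg).2 hA.isUnit)
  have hSh : Sᴴ = S := IsSelfAdjoint.of_nonneg (CFC.sqrt_nonneg A)
  set C := S⁻¹ * B * S⁻¹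
  have hC : C.PosSemidef := by
    simpa [conjTranspose_nonsing_inv, hSh] using hB.conjTranspose_mul_mul_same S⁻¹
  have hBC : B = S * C * S := by
    simp only [C, ← mul_assoc, mul_nonsing_inv _ hS, one_mul]
    rw [mul_assoc, nonsing_inv_mul _ hS, mul_one]
  have hABC : A + B = S * (1 + C) * S := by
    rw [mul_add, add_mul, mul_one, hSS, ← hBC]
  have hre : ∀ X, RCLike.re (S * X * S).det = RCLike.re A.det * RCLike.re X.det := fun X => by
    rw [det_mul, det_mul, mul_right_comm, ← det_mul, hSS, ← RCLike.re_ofReal_mul,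
      hA.1.ofReal_re_det]
  set μ := hC.1.eigenvalues
  have hμ : ∀ i, 0 ≤ μ i := hC.eigenvalues_nonneg
  have ha := hA.posSemidef.re_det_nonneg
  rw [hABC, hBC, hre, hre, hC.1.det_one_add, ← RCLike.ofReal_prod, RCLike.ofReal_re,
    hC.1.re_det_eq_prod_eigenvalues, Real.mul_rpow ha (Finset.prod_nonneg fun i _ => hμ i),
    Real.mul_rpow ha (Finset.prod_nonneg fun i _ => add_nonneg zero_le_one (hμ i))]
  calc _ = RCLike.re A.det ^ (Fintype.card n : ℝ)⁻¹ *
        (1 + (∏ i, μ i) ^ (Fintype.card n : ℝ)⁻¹) := by ring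
    _ ≤ _ := mul_le_mul_of_nonneg_left (Real.one_add_prod_rpow_inv_card_le hμ) (by positivity)

end Matrix

/-- Concavity of `M ↦ (det M)^(1/n)` on positive definite Hermitian matrices. -/
theorem det_rpow_inv_concave_posDef (n : ℕ) (hn : 1 ≤ n)
    (A B : Matrix (Fin n) (Fin n) ℂ) (hA : A.PosDef) (hB : B.PosDef)
    (t : ℝ) (ht0 : 0 ≤ t) (ht1 : t ≤ 1) :
    ((1 - t) • A + t • B).det.re ^ ((n : ℝ)⁻¹) ≥
      (1 - t) * A.det.re ^ ((n : ℝ)⁻¹) + t * B.det.re ^ ((n : ℝ)⁻¹) := by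
  have : Nonempty (Fin n) := ⟨⟨0, hn⟩⟩
  rcases ht0.eq_or_lt with rfl | ht0
  · simp
  rcases ht1.eq_or_lt with rfl | ht1
  · simp
  have key := (hA.smul (sub_pos.2 ht1)).re_det_rpow_add_le (hB.smul ht0).posSemidef
  rwa [Matrix.re_det_smul_rpow_inv_card hA.posSemidef.re_det_nonneg (sub_pos.2 ht1).le,
    Matrix.re_det_smul_rpow_inv_card hB.posSemidef.re_det_nonneg ht0.le, Fintype.card_fin] at key
end

section
/- For positive definite n×n Hermitian matrices A and B, det(A + B)^(1/n) ≥ det(A)^(1/n) + det(B)^(1/n). -/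
/-!
Write `A = S* S` with `S` invertible and `B = S* C S`; then `C` is positive definite and
`det (A + B) = det A · det (1 + C)`, `det B = det A · det C`, so it suffices to show
`1 + (det C)^(1/n) ≤ det (1 + C)^(1/n)`. In terms of the eigenvalues `μᵢ > 0` of `C` this is
superadditivity of the geometric mean, `∏ 1^(1/n) + ∏ μᵢ^(1/n) ≤ ∏ (1 + μᵢ)^(1/n)`, which is
AM-GM applied to the ratios `1 / (1 + μᵢ)` and `μᵢ / (1 + μᵢ)`, whose means add up to `1`.
-/

open ComplexOrder Finset

theorem Real.prod_rpow_add_prod_rpow_le_prod_add_rpow {ι : Type*} (s : Finset ι)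
    {w a b : ι → ℝ} (hw : ∀ i ∈ s, 0 ≤ w i) (hw' : ∑ i ∈ s, w i = 1)
    (ha : ∀ i ∈ s, 0 < a i) (hb : ∀ i ∈ s, 0 < b i) :
    ∏ i ∈ s, a i ^ w i + ∏ i ∈ s, b i ^ w i ≤ ∏ i ∈ s, (a i + b i) ^ w i := by
  have hc : ∀ i ∈ s, 0 < a i + b i := fun i hi => add_pos (ha i hi) (hb i hi)
  have amgm : ∀ x : ι → ℝ, (∀ i ∈ s, 0 < x i) →
      (∏ i ∈ s, x i ^ w i) / ∏ i ∈ s, (a i + b i) ^ w i ≤ ∑ i ∈ s, w i * (x i / (a i + b i)) := by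
    intro x hx
    rw [← prod_div_distrib]
    refine le_of_eq_of_le (prod_congr rfl fun i hi => ?_)
      (geom_mean_le_arith_mean_weighted s w _ hw hw' fun i hi => (div_pos (hx i hi) (hc i hi)).le)
    exact (Real.div_rpow (hx i hi).le (hc i hi).le _).symm
  rw [← div_le_one (prod_pos fun i hi => Real.rpow_pos_of_pos (hc i hi) _), add_div]
  calc _ ≤ ∑ i ∈ s, w i * (a i / (a i + b i)) + ∑ i ∈ s, w i * (b i / (a i + b i)) :=
        add_le_add (amgm a ha) (amgm b hb)
    _ = ∑ i ∈ s, w i := by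
        rw [← sum_add_distrib]
        exact sum_congr rfl fun i hi => by field_simp [(hc i hi).ne']
    _ = 1 := hw'

namespace Matrix

variable {n 𝕜 : Type*} [Fintype n] [DecidableEq n] [RCLike 𝕜]

theorem re_det_star_mul_mul (S M : Matrix n n 𝕜) :
    RCLike.re (star S * M * S).det = RCLike.re (star S * S).det * RCLike.re M.det := by
  simp only [det_mul, star_eq_conjTranspose, det_conjTranspose, mul_right_comm _ M.det,
    RCLike.star_def, RCLike.conj_mul]
  norm_cast
  simp

theorem IsHermitian.det_one_add_s1 {C : Matrix n n 𝕜} (hC : C.IsHermitian) :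
    (1 + C).det = ∏ i, ((1 + hC.eigenvalues i : ℝ) : 𝕜) := by
  have : 1 + C = cfc (fun x : ℝ => 1 + x) C := by
    rw [cfc_add .., cfc_const_one ℝ C, cfc_id' ℝ C]
  rw [this, hC.cfc_eq]
  simp [IsHermitian.cfc, -Unitary.conjStarAlgAut_apply]

theorem PosDef.exists_isUnit_eq_star_mul_self {A : Matrix n n 𝕜} (hA : A.PosDef) :
    ∃ S : Matrix n n 𝕜, IsUnit S ∧ A = star S * S := by
  open scoped MatrixOrder in
  obtain ⟨S, rfl⟩ := CStarAlgebra.nonneg_iff_eq_star_mul_self.mp hA.posSemidef.nonneg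
  refine ⟨S, ?_, rfl⟩
  have hdet := (isUnit_iff_isUnit_det _).mp hA.isUnit
  rw [det_mul] at hdet
  exact (isUnit_iff_isUnit_det S).mpr (isUnit_of_mul_isUnit_right hdet)

theorem PosDef.exists_eq_star_mul_mul {B S : Matrix n n 𝕜} (hB : B.PosDef) (hS : IsUnit S) :
    ∃ C : Matrix n n 𝕜, C.PosDef ∧ B = star S * C * S := by
  lift S to (Matrix n n 𝕜)ˣ using hS
  refine ⟨star (↑S⁻¹ : Matrix n n 𝕜) * B * (↑S⁻¹ : Matrix n n 𝕜),
    (IsUnit.posDef_star_left_conjugate_iff (Units.isUnit S⁻¹)).mpr hB, ?_⟩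
  simp only [← mul_assoc, ← star_mul, Units.inv_mul, star_one, one_mul]
  simp [mul_assoc]

theorem PosDef.one_add_re_det_rpow_le [Nonempty n] {C : Matrix n n 𝕜} (hC : C.PosDef) :
    1 + RCLike.re C.det ^ (Fintype.card n : ℝ)⁻¹ ≤
      RCLike.re (1 + C).det ^ (Fintype.card n : ℝ)⁻¹ := by
  have hw : ∑ _i : n, (Fintype.card n : ℝ)⁻¹ = 1 := by simp
  have hμ := hC.eigenvalues_pos
  rw [hC.1.det_one_add_s1, hC.1.det_eq_prod_eigenvalues]
  simp only [← RCLike.ofReal_prod, RCLike.ofReal_re]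
  rw [← Real.finsetProd_rpow _ _ fun i _ => (hμ i).le,
    ← Real.finsetProd_rpow _ _ fun i _ => (add_pos one_pos (hμ i)).le]
  simpa using Real.prod_rpow_add_prod_rpow_le_prod_add_rpow univ (fun _ _ => by positivity) hw
    (fun _ _ => one_pos) fun i _ => hμ i

end Matrix

/-- Minkowski determinant inequality for positive definite Hermitian matrices. -/
theorem det_add_rpow_inv_ge (n : ℕ) (hn : 1 ≤ n)
    (A B : Matrix (Fin n) (Fin n) ℂ) (hA : A.PosDef) (hB : B.PosDef) :
    (A + B).det.re ^ ((n : ℝ)⁻¹) ≥ A.det.re ^ ((n : ℝ)⁻¹) + B.det.re ^ ((n : ℝ)⁻¹) := by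
  obtain ⟨S, hS, rfl⟩ := hA.exists_isUnit_eq_star_mul_self
  obtain ⟨C, hC, rfl⟩ := hB.exists_eq_star_mul_mul hS
  have : Nonempty (Fin n) := ⟨⟨0, hn⟩⟩
  have key := hC.one_add_re_det_rpow_le
  have ha := (RCLike.pos_iff.mp hA.det_pos).1
  have hc := (RCLike.pos_iff.mp hC.det_pos).1
  have hd := (RCLike.pos_iff.mp (Matrix.PosDef.one.add hC).det_pos).1
  have hdetAB := Matrix.re_det_star_mul_mul S (1 + C)
  have hdetB := Matrix.re_det_star_mul_mul S C
  simp only [RCLike.re_to_complex, Fintype.card_fin] at key ha hc hd hdetAB hdetB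
  have hsum : star S * S + star S * C * S = star S * (1 + C) * S := by noncomm_ring
  rw [hsum, hdetAB, hdetB, Real.mul_rpow ha.le hd.le, Real.mul_rpow ha.le hc.le, ge_iff_le,
    ← mul_one_add]
  exact mul_le_mul_of_nonneg_left key (Real.rpow_nonneg ha.le _)
end

section
/- The function (λ₁, λ₂) ↦ arctan(λ₁) + arctan(λ₂) has convex superlevel sets {λ ∈ ℝ² : arctan(λ₁) + arctan(λ₂) ≥ c} for every c ≥ 0. -/
/-!
For `0 ≤ c < π` the superlevel set is the epigraph of `x ↦ tan (c - arctan x)` over the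
half-line where `c - arctan x < π / 2`. By the addition formulas this function is the Möbius map
`x ↦ (sin c - cos c * x) / (sin c * x + cos c)`, of determinant `sin² c + cos² c = 1`, and such a
map is convex where its denominator is positive as soon as `sin c ≥ 0`. For `c ≥ π` the set is
empty.
-/

open Real

theorem convexOn_div_affine {p q r s : ℝ} (hp : 0 ≤ p) (hdet : r * q ≤ p * s) :
    ConvexOn ℝ {x | 0 < p * x + q} (fun x => (r * x + s) / (p * x + q)) := by
  have hconvex : Convex ℝ {x : ℝ | 0 < p * x + q} := by
    intro x hx y hy a b ha hb hab
    have := (convex_Ioi (0 : ℝ)) hx hy ha hb hab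
    simp only [Set.mem_Ioi, smul_eq_mul] at this
    show 0 < p * (a * x + b * y) + q
    linear_combination this + q * hab
  refine ⟨hconvex, fun x hx y hy a b ha hb hab => ?_⟩
  have hz := hconvex hx hy ha hb hab
  simp only [Set.mem_ofPred_eq, smul_eq_mul] at hx hy hz ⊢
  obtain rfl : b = 1 - a := by linarith
  have gap : a * ((r * x + s) / (p * x + q)) + (1 - a) * ((r * y + s) / (p * y + q))
      - (r * (a * x + (1 - a) * y) + s) / (p * (a * x + (1 - a) * y) + q)
      = (p * s - r * q) * p * (a * (1 - a)) * (x - y) ^ 2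
        / ((p * x + q) * (p * y + q) * (p * (a * x + (1 - a) * y) + q)) := by
    have hx' : p * x + q ≠ 0 := hx.ne'
    have hy' : p * y + q ≠ 0 := hy.ne'
    have hz' : p * (a * x + (1 - a) * y) + q ≠ 0 := hz.ne'
    rw [← mul_div_assoc, ← mul_div_assoc, div_add_div _ _ hx' hy',
      div_sub_div _ _ (mul_ne_zero hx' hy') hz', div_eq_div_iff (by positivity) (by positivity)]
    ring
  have gap_nonneg : 0 ≤ (p * s - r * q) * p * (a * (1 - a)) * (x - y) ^ 2
        / ((p * x + q) * (p * y + q) * (p * (a * x + (1 - a) * y) + q)) := by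
    have := mul_nonneg (mul_nonneg (sub_nonneg.2 hdet) hp) (mul_nonneg ha hb)
    positivity
  linarith

namespace Real

theorem sin_arctan_eq_mul_cos_arctan (x : ℝ) : sin (arctan x) = x * cos (arctan x) := by
  rw [sin_arctan, cos_arctan, mul_one_div]

theorem sin_sub_arctan (c x : ℝ) :
    sin (c - arctan x) = cos (arctan x) * (sin c - cos c * x) := by
  rw [sin_sub, sin_arctan_eq_mul_cos_arctan]; ring

theorem cos_sub_arctan (c x : ℝ) :
    cos (c - arctan x) = cos (arctan x) * (sin c * x + cos c) := by
  rw [cos_sub, sin_arctan_eq_mul_cos_arctan]; ring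

theorem tan_sub_arctan (c x : ℝ) :
    tan (c - arctan x) = (sin c - cos c * x) / (sin c * x + cos c) := by
  rw [tan_eq_sin_div_cos, sin_sub_arctan, cos_sub_arctan,
    mul_div_mul_left _ _ (cos_arctan_pos x).ne']

theorem tan_le_iff_le_arctan {θ y : ℝ} (h₁ : -(π / 2) < θ) (h₂ : θ < π / 2) :
    tan θ ≤ y ↔ θ ≤ arctan y := by
  rw [← arctan_le_arctan_iff, arctan_tan h₁ h₂]

theorem sub_arctan_lt_pi_div_two_iff {c x : ℝ} (hc₀ : 0 ≤ c) (hcπ : c < π) :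
    c - arctan x < π / 2 ↔ 0 < sin c * x + cos c := by
  have hlo := neg_pi_div_two_lt_arctan x
  have hhi := arctan_lt_pi_div_two x
  rw [← mul_pos_iff_of_pos_left (cos_arctan_pos x), ← cos_sub_arctan]
  constructor
  · intro h
    exact cos_pos_of_mem_Ioo ⟨by linarith, h⟩
  · intro h
    by_contra! h'
    exact h.not_ge (cos_nonpos_of_pi_div_two_le_of_le h' (by linarith))

theorem le_arctan_add_arctan_iff {c x y : ℝ} (hc₀ : 0 ≤ c) (hcπ : c < π) :
    c ≤ arctan x + arctan y ↔
      0 < sin c * x + cos c ∧ (sin c - cos c * x) / (sin c * x + cos c) ≤ y := by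
  rw [← sub_arctan_lt_pi_div_two_iff hc₀ hcπ, ← tan_sub_arctan]
  have hlo : -(π / 2) < c - arctan x := by linarith [arctan_lt_pi_div_two x]
  constructor
  · intro h
    have hlt : c - arctan x < π / 2 := by linarith [arctan_lt_pi_div_two y]
    exact ⟨hlt, (tan_le_iff_le_arctan hlo hlt).2 (by linarith)⟩
  · rintro ⟨hlt, hy⟩
    linarith [(tan_le_iff_le_arctan hlo hlt).1 hy]

theorem arctan_add_arctan_lt_pi (x y : ℝ) : arctan x + arctan y < π := by
  linarith [arctan_lt_pi_div_two x, arctan_lt_pi_div_two y]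

end Real

/-- Superlevel sets of `(λ₁,λ₂) ↦ arctan λ₁ + arctan λ₂` at nonnegative levels are convex. -/
theorem arctan_sum_superlevel_convex (c : ℝ) (hc : 0 ≤ c) :
    Convex ℝ {p : ℝ × ℝ | c ≤ Real.arctan p.1 + Real.arctan p.2} := by
  rcases lt_or_ge c π with hcπ | hcπ
  · have hepi : {p : ℝ × ℝ | c ≤ arctan p.1 + arctan p.2} =
        {p | p.1 ∈ {x | 0 < sin c * x + cos c} ∧
          (-cos c * p.1 + sin c) / (sin c * p.1 + cos c) ≤ p.2} := by
      ext p
      simp only [Set.mem_ofPred_eq, le_arctan_add_arctan_iff hc hcπ, neg_mul, neg_add_eq_sub]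
    rw [hepi]
    refine (convexOn_div_affine (sin_nonneg_of_nonneg_of_le_pi hc hcπ.le) ?_).convex_epigraph
    nlinarith [sin_sq_add_cos_sq c]
  · convert convex_empty (𝕜 := ℝ)
    exact Set.eq_empty_of_forall_notMem fun p hp =>
      (arctan_add_arctan_lt_pi p.1 p.2).not_ge (hcπ.trans hp)
end
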